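/- Let G be a finite group acting on a finite set S, f : S → S G-equivariant, and N = |G| · (max over H ≤ G of (card(S/H))!). Then for every subgroup H ≤ G, the number of H-orbits of Per_N(S,f) equals the number of periodic points of the induced map f_H on S/H: |Per_N(S,f)/H| = |Per(S/H, f_H)|. -/

import Mathlib

/-!
Every period of `f` is at most `|S| = |S/⊥|`, so `(|S|)!` divides `N` and `Per_N(S,f)` is the set
of all periodic points of `f`. The quotient map `S → S/H` semiconjugates `f` to `f_H`, and a
semiconjugacy by a surjection between finite sets maps periodic points onto periodic points:
if `[x]` has period `k`, the `f^k`-orbit of `x` eventually becomes periodic and stays in `[x]`.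
-/

open scoped Classical

open Function Set Nat

namespace Function

variable {α β : Type*}

theorem exists_iterate_mem_periodicPts [Finite α] (f : α → α) (x : α) :
    ∃ n, f^[n] x ∈ periodicPts f := by
  obtain ⟨a, b, hab, hfab⟩ := Set.finite_univ.exists_lt_map_eq_of_forall_mem
    (f := fun n => f^[n] x) fun _ => mem_univ _
  refine ⟨a, mk_mem_periodicPts (Nat.sub_pos_of_lt hab) ?_⟩
  change f^[b - a] (f^[a] x) = f^[a] x
  rw [← iterate_add_apply, Nat.sub_add_cancel hab.le]
  exact hfab.symm

theorem Semiconj.image_periodicPts [Finite α] {π : α → β} {fa : α → α} {fb : β → β}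
    (h : Semiconj π fa fb) (hπ : Surjective π) :
    π '' periodicPts fa = periodicPts fb := by
  refine subset_antisymm h.mapsTo_periodicPts.image_subset ?_
  rintro q ⟨k, hk, hq⟩
  obtain ⟨x, rfl⟩ := hπ q
  obtain ⟨n, m, hm, hy⟩ := exists_iterate_mem_periodicPts fa^[k] x
  refine ⟨(fa^[k])^[n] x, mk_mem_periodicPts (Nat.mul_pos hk hm) ?_, ?_⟩
  · rwa [IsPeriodicPt, IsFixedPt, iterate_mul]
  · rw [(h.iterate_right k).iterate_right n, iterate_fixed hq]

theorem setOf_isPeriodicPt_eq_periodicPts [Finite α] {f : α → α} {n : ℕ} (hn : 0 < n)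
    (hdvd : (Nat.card α)! ∣ n) : {x | IsPeriodicPt f n x} = periodicPts f := by
  have := Fintype.ofFinite α
  refine subset_antisymm (fun x hx => mk_mem_periodicPts hn hx) fun x hx => ?_
  obtain ⟨c, rfl⟩ := hdvd
  rw [Nat.card_eq_fintype_card]
  exact (isPeriodicPt_factorial_card_of_mem_periodicPts hx).mul_const c

end Function

namespace MulAction

variable {G α : Type*} [Group G] [MulAction G α]

theorem card_orbitRel_quotient_le [Finite α] :
    Nat.card (Quotient (orbitRel G α)) ≤ Nat.card α :=
  Nat.card_le_card_of_surjective _ Quotient.mk_surjective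

theorem card_orbitRel_bot_quotient :
    Nat.card (Quotient (orbitRel (⊥ : Subgroup G) α)) = Nat.card α := by
  refine (Nat.card_eq_of_bijective _ ⟨fun a b hab => ?_, Quotient.mk_surjective⟩).symm
  obtain ⟨g, rfl⟩ := Quotient.exact hab
  rw [Subsingleton.elim g 1]
  exact one_smul _ b

theorem sup_factorial_card_orbitRel_quotient [Fintype G] [Finite α] :
    (Finset.univ.sup fun H : Subgroup G => (Nat.card (Quotient (orbitRel H α)))!) =
      (Nat.card α)! := by
  refine le_antisymm (Finset.sup_le fun H _ => factorial_le card_orbitRel_quotient_le) ?_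
  simpa only [card_orbitRel_bot_quotient] using
    Finset.le_sup (f := fun H : Subgroup G => (Nat.card (Quotient (orbitRel H α)))!)
      (Finset.mem_univ ⊥)

end MulAction

/-- Since `Per_N(S,f)` is `H`-invariant, its set of `H`-orbits is identified with its image
in `S/H`. -/
theorem card_orbits_perN_eq_card_periodic_general {G S : Type} [Group G] [Fintype G]
    [Fintype S] [MulAction G S]
    (f : S → S)
    (fbar : ∀ H : Subgroup G,
      Quotient (MulAction.orbitRel H S) → Quotient (MulAction.orbitRel H S))
    (hfbar : ∀ H : Subgroup G, fbar H ∘ Quotient.mk (MulAction.orbitRel H S) =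
      Quotient.mk (MulAction.orbitRel H S) ∘ f)
    (N : ℕ)
    (hN : N = Nat.card G * (Finset.univ.sup fun H : Subgroup G =>
      Nat.factorial (Nat.card (Quotient (MulAction.orbitRel H S))))) :
    ∀ H : Subgroup G,
      Nat.card (Quotient.mk (MulAction.orbitRel H S) '' {P : S | f^[N] P = P} : Set _) =
        Nat.card {Q : Quotient (MulAction.orbitRel H S) //
          ∃ k ≥ 1, (fbar H)^[k] Q = Q} := by
  intro H
  rw [MulAction.sup_factorial_card_orbitRel_quotient] at hN
  have hNpos : 0 < N := hN ▸ Nat.mul_pos Nat.card_pos (factorial_pos _)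
  have hsemiconj : Semiconj (Quotient.mk (MulAction.orbitRel H S)) f (fbar H) :=
    fun x => (congrFun (hfbar H) x).symm
  have hperiodic : Quotient.mk _ '' {P | f^[N] P = P} = periodicPts (fbar H) := by
    rw [← hsemiconj.image_periodicPts Quotient.mk_surjective,
      ← setOf_isPeriodicPt_eq_periodicPts hNpos (hN ▸ dvd_mul_left _ _)]
    rfl
  rw [hperiodic]
  rfl

/-- With `N = |G| * max_{H ≤ G} (card (S/H))!`, for every subgroup `H ≤ G` the
number of `H`-orbits of `Per_N(S,f)` equals the number of periodic points of the
induced map `f_H` on `S/H`.  Since `Per_N(S,f)` is `H`-invariant, its set of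
`H`-orbits is identified with its image in `S/H`. -/
theorem card_orbits_perN_eq_card_periodic {G S : Type} [Group G] [Fintype G]
    [Fintype S] [MulAction G S]
    (f : S → S) (hf : ∀ (g : G) (x : S), f (g • x) = g • f x)
    (fbar : ∀ H : Subgroup G,
      Quotient (MulAction.orbitRel H S) → Quotient (MulAction.orbitRel H S))
    (hfbar : ∀ H : Subgroup G, fbar H ∘ Quotient.mk (MulAction.orbitRel H S) =
      Quotient.mk (MulAction.orbitRel H S) ∘ f)
    (N : ℕ)
    (hN : N = Nat.card G * (Finset.univ.sup fun H : Subgroup G =>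
      Nat.factorial (Nat.card (Quotient (MulAction.orbitRel H S))))) :
    ∀ H : Subgroup G,
      Nat.card (Quotient.mk (MulAction.orbitRel H S) '' {P : S | f^[N] P = P} : Set _) =
        Nat.card {Q : Quotient (MulAction.orbitRel H S) //
          ∃ k ≥ 1, (fbar H)^[k] Q = Q} :=
  card_orbits_perN_eq_card_periodic_general f fbar hfbar N hN
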